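/- arXiv:0705.0974 — 5 statements merged into one kernel-verified Lean document; each statement's English description precedes it below -/
import Mathlib

section
/- Let A and B be n×n positive semidefinite Hermitian matrices with det(A) ≥ a ≥ 0 and det(B) ≥ b ≥ 0. Then for every k with 0 ≤ k ≤ n, the mixed determinant D_k(A,B) := (1/\binom{n}{k}) · (coefficient of t^k s^{n-k} in det(tA+sB)) satisfies D_k(A,B) ≥ a^{k/n} · b^{(n-k)/n}. -/
/-!
If `B` is positive definite, write `B = S²` and `A = S M S` with `M ⪰ 0` having eigenvalues
`μᵢ ≥ 0`. Then `det (t A + B) = det B · ∏ (1 + t μᵢ)`, so the `k`-th coefficient is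
`det B · eₖ(μ)`, and AM-GM over the `k`-subsets gives
`eₖ(μ) ≥ (n choose k) (∏ μᵢ)^(k/n) = (n choose k) (det A / det B)^(k/n)`.
For merely semidefinite `A`, `B` we pass to `A + ε`, `B + ε` and let `ε → 0`: by Lagrange
interpolation the `k`-th coefficient is a fixed linear combination of the values `det (j A + B)`,
`j = 0, …, n`, hence continuous in `ε`.
-/

open Matrix Finset Polynomial
open scoped ComplexOrder

theorem Lagrange.exists_sum_mul_eval_eq_coeff {K ι : Type*} [Field K] [DecidableEq ι]
    (s : Finset ι) {v : ι → K} (hv : Set.InjOn v s) (k : ℕ) :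
    ∃ w : ι → K, ∀ p : K[X], p.degree < #s → ∑ i ∈ s, w i * p.eval (v i) = p.coeff k := by
  refine ⟨fun i => (Lagrange.basis s v i).coeff k, fun p hp => ?_⟩
  conv_rhs => rw [Lagrange.eq_interpolate hv hp, Lagrange.interpolate_apply, finsetSum_coeff]
  exact sum_congr rfl fun i _ => by rw [coeff_C_mul, mul_comm]

theorem exists_sum_mul_sum_pow_eq {K : Type*} [Field K] [CharZero K] {n k : ℕ} (hk : k ≤ n) :
    ∃ w : ℕ → K, ∀ d : ℕ → K,
      ∑ j ∈ range (n + 1), w j * ∑ m ∈ range (n + 1), d m * (j : K) ^ m = d k := by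
  obtain ⟨w, hw⟩ := Lagrange.exists_sum_mul_eval_eq_coeff (range (n + 1))
    (Nat.cast_injective (R := K)).injOn k
  refine ⟨w, fun d => ?_⟩
  set p : K[X] := ∑ m ∈ range (n + 1), C (d m) * X ^ m
  have hcoeff (j : ℕ) : p.coeff j = if j ≤ n then d j else 0 := by
    simp [p, finsetSum_coeff]
  have hdeg : p.degree < #(range (n + 1)) := by
    rw [card_range, degree_lt_iff_coeff_zero]
    intro j hj
    simp [hcoeff]
    omega
  simpa [p, eval_finsetSum, hcoeff, hk] using hw p hdeg

theorem Matrix.IsHermitian.det_smul_add_smul_one {ι : Type*} [Fintype ι] [DecidableEq ι]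
    {M : Matrix ι ι ℂ} (hM : M.IsHermitian) (t s : ℂ) :
    (t • M + s • 1).det = ∏ i, (t * hM.eigenvalues i + s) := by
  set U := hM.eigenvectorUnitary
  have hconj : t • M + s • 1 = Unitary.conjStarAlgAut ℂ _ U
      (diagonal fun i => t * hM.eigenvalues i + s) := by
    have hdiag : (diagonal fun i => t * hM.eigenvalues i + s) =
        t • diagonal (RCLike.ofReal ∘ hM.eigenvalues) + s • 1 := by
      ext i j
      rcases eq_or_ne i j with rfl | hij <;> simp [*]
    rw [hdiag, map_add, map_smul, map_smul, map_one, ← hM.spectral_theorem]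
  rw [hconj, Unitary.conjStarAlgAut_apply, det_mul, det_mul, mul_right_comm, ← det_mul,
    Unitary.mul_star_self_of_mem U.2, det_one, one_mul, det_diagonal]

open scoped MatrixOrder in
theorem Matrix.PosSemidef.exists_det_smul_add_smul_eq {ι : Type*} [Fintype ι] [DecidableEq ι]
    {A B : Matrix ι ι ℂ} (hA : A.PosSemidef) (hB : B.PosDef) :
    ∃ μ : ι → ℝ, (∀ i, 0 ≤ μ i) ∧
      ∀ t s : ℂ, (t • A + s • B).det = B.det * ∏ i, (t * μ i + s) := by
  obtain ⟨S, hS, rfl⟩ : ∃ S : Matrix ι ι ℂ, S.IsHermitian ∧ B = S * S :=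
    ⟨CFC.sqrt B, (CFC.sqrt_nonneg B).posSemidef.isHermitian,
      (CFC.sqrt_mul_sqrt_self B hB.posSemidef.nonneg).symm⟩
  have hSdet : IsUnit S.det := by
    have := (isUnit_iff_isUnit_det _).mp hB.isUnit
    rw [det_mul] at this
    exact isUnit_of_mul_isUnit_left this
  set M := S⁻¹ * A * S⁻¹
  have hM : M.PosSemidef := by simpa [hS.inv.eq] using hA.mul_mul_conjTranspose_same S⁻¹
  have hAM : A = S * M * S := by
    simp only [M, ← mul_assoc, mul_nonsing_inv _ hSdet, one_mul]
    rw [mul_assoc, nonsing_inv_mul _ hSdet, mul_one]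
  refine ⟨hM.isHermitian.eigenvalues, hM.eigenvalues_nonneg, fun t s => ?_⟩
  have hconj : t • A + s • (S * S) = S * (t • M + s • 1) * S := by
    rw [hAM, mul_add, add_mul, Matrix.mul_smul, Matrix.smul_mul, Matrix.mul_smul, Matrix.smul_mul,
      mul_one]
  rw [hconj, det_mul, det_mul, hM.isHermitian.det_smul_add_smul_one, det_mul]
  ring

theorem Finset.prod_mul_add_one_eq_sum {ι R : Type*} [CommSemiring R] (s : Finset ι)
    (f : ι → R) (t : R) :
    ∏ i ∈ s, (t * f i + 1) =
      ∑ m ∈ range (#s + 1), (∑ T ∈ s.powersetCard m, ∏ i ∈ T, f i) * t ^ m := by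
  rw [prod_add_one, sum_powerset]
  refine sum_congr rfl fun m _ => ?_
  rw [sum_mul]
  refine sum_congr rfl fun T hT => ?_
  rw [prod_mul_distrib, prod_const, (mem_powersetCard.mp hT).2, mul_comm]

theorem Finset.prod_powersetCard_prod {ι M : Type*} [CommMonoid M] [DecidableEq ι]
    (s : Finset ι) (f : ι → M) {k : ℕ} (hk : 1 ≤ k) :
    ∏ T ∈ s.powersetCard k, ∏ i ∈ T, f i = (∏ i ∈ s, f i) ^ (#s - 1).choose (k - 1) := by
  rw [prod_comm' (t' := s) (s' := fun i => {T ∈ s.powersetCard k | {i} ⊆ T})]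
  · rw [← prod_pow]
    refine prod_congr rfl fun i hi => ?_
    rw [prod_const, card_filter_powersetCard_subset _ _ _ (singleton_subset_iff.mpr hi)
      (by simpa using hk), card_singleton]
  · intro T i
    simp only [mem_powersetCard, mem_filter, singleton_subset_iff]
    exact ⟨fun ⟨hT, hi⟩ => ⟨⟨hT, hi⟩, hT.1 hi⟩, fun ⟨h, _⟩ => h⟩

theorem Finset.choose_mul_prod_rpow_le_sum_powersetCard_prod {ι : Type*} [DecidableEq ι]
    (s : Finset ι) {f : ι → ℝ} (hf : ∀ i ∈ s, 0 ≤ f i) {k : ℕ} (hk : k ≤ #s) :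
    ((#s).choose k : ℝ) * (∏ i ∈ s, f i) ^ ((k : ℝ) / #s)
      ≤ ∑ T ∈ s.powersetCard k, ∏ i ∈ T, f i := by
  rcases Nat.eq_zero_or_pos k with rfl | hk1
  · simp
  have hN : (0 : ℝ) < (#s).choose k := by exact_mod_cast Nat.choose_pos hk
  have hamgm := Real.geom_mean_le_arith_mean (s.powersetCard k) (fun _ => 1)
    (fun T => ∏ i ∈ T, f i) (fun _ _ => zero_le_one)
    (by simpa using hN) (fun T hT => prod_nonneg fun i hi => hf i ((mem_powersetCard.mp hT).1 hi))
  simp only [Real.rpow_one, sum_const, card_powersetCard, nsmul_eq_mul, mul_one, one_mul] at hamgm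
  rw [prod_powersetCard_prod s f hk1, ← Real.rpow_natCast, ← Real.rpow_mul (prod_nonneg hf)]
    at hamgm
  have hexp : (((#s - 1).choose (k - 1) : ℕ) : ℝ) * ((#s).choose k : ℝ)⁻¹ = k / #s := by
    have h := Nat.add_one_mul_choose_eq (#s - 1) (k - 1)
    rw [Nat.sub_add_cancel (by omega), Nat.sub_add_cancel hk1] at h
    have h' : (#s : ℝ) * ((#s - 1).choose (k - 1) : ℕ) = ((#s).choose k : ℝ) * k := by
      exact_mod_cast h
    have hs : (#s : ℝ) ≠ 0 := by exact_mod_cast (hk1.trans_le hk).ne'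
    field_simp
    linarith
  rw [hexp, le_div_iff₀ hN] at hamgm
  linarith

theorem Matrix.PosSemidef.choose_mul_rpow_mul_rpow_le_sum_mul_re_det {ι : Type*} [Fintype ι]
    [DecidableEq ι] {n k : ℕ} (hι : Fintype.card ι = n) (hn : 0 < n) (hk : k ≤ n)
    {A B : Matrix ι ι ℂ} (hA : A.PosSemidef) (hB : B.PosDef) {w : ℕ → ℝ}
    (hw : ∀ d : ℕ → ℝ, ∑ j ∈ range (n + 1), w j * ∑ m ∈ range (n + 1), d m * (j : ℝ) ^ m = d k) :
    (n.choose k : ℝ) * A.det.re ^ ((k : ℝ) / n) * B.det.re ^ (((n - k : ℕ) : ℝ) / n)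
      ≤ ∑ j ∈ range (n + 1), w j * ((j : ℂ) • A + B).det.re := by
  obtain ⟨μ, hμ, hdet⟩ := hA.exists_det_smul_add_smul_eq hB
  set β := B.det.re
  have hBβ : B.det = β := Complex.ext rfl (Complex.pos_iff.mp hB.det_pos).2.symm
  have hβ : 0 < β := (Complex.pos_iff.mp hB.det_pos).1
  have hAdet : A.det.re = β * ∏ i, μ i := by
    simpa [hBβ, ← Complex.ofReal_prod] using congrArg Complex.re (hdet 1 0)
  set e : ℕ → ℝ := fun m => ∑ T ∈ univ.powersetCard m, ∏ i ∈ T, μ i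
  have hpoly (t : ℝ) : ((t : ℂ) • A + B).det.re = ∑ m ∈ range (n + 1), β * e m * t ^ m := by
    have hprod : ∏ i, ((t : ℂ) * μ i + 1) = ((∏ i, (t * μ i + 1) : ℝ) : ℂ) := by push_cast; rfl
    rw [← one_smul ℂ B, hdet, hBβ, hprod, ← Complex.ofReal_mul, Complex.ofReal_re,
      prod_mul_add_one_eq_sum, card_univ, hι, mul_sum]
    exact sum_congr rfl fun m _ => by ring
  have hsum : ∑ j ∈ range (n + 1), w j * ((j : ℂ) • A + B).det.re = β * e k := by
    rw [← hw fun m => β * e m]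
    exact sum_congr rfl fun j _ => by rw [← hpoly, Complex.ofReal_natCast]
  have hamgm := univ.choose_mul_prod_rpow_le_sum_powersetCard_prod (fun i _ => hμ i)
    (k := k) (by rwa [card_univ, hι])
  rw [card_univ, hι] at hamgm
  have hβsplit : β ^ ((k : ℝ) / n) * β ^ (((n - k : ℕ) : ℝ) / n) = β := by
    rw [← Real.rpow_add hβ, Nat.cast_sub hk, ← add_div, add_sub_cancel, div_self (by positivity),
      Real.rpow_one]
  calc (n.choose k : ℝ) * A.det.re ^ ((k : ℝ) / n) * B.det.re ^ (((n - k : ℕ) : ℝ) / n)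
      = β * ((n.choose k : ℝ) * (∏ i, μ i) ^ ((k : ℝ) / n)) := by
        rw [hAdet, Real.mul_rpow hβ.le (prod_nonneg fun i _ => hμ i)]
        linear_combination ((n.choose k : ℝ) * (∏ i, μ i) ^ ((k : ℝ) / n)) * hβsplit
    _ ≤ β * e k := mul_le_mul_of_nonneg_left hamgm hβ.le
    _ = _ := hsum.symm

theorem Matrix.PosSemidef.re_det_le_re_det_add_smul_one {ι : Type*} [Fintype ι] [DecidableEq ι]
    {A : Matrix ι ι ℂ} (hA : A.PosSemidef) {ε : ℝ} (hε : 0 ≤ ε) :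
    A.det.re ≤ (A + (ε : ℂ) • 1).det.re := by
  have hshift (s : ℝ) : (A + (s : ℂ) • 1).det.re = ∏ i, (hA.isHermitian.eigenvalues i + s) := by
    simpa [← Complex.ofReal_add, ← Complex.ofReal_prod] using
      congrArg Complex.re (hA.isHermitian.det_smul_add_smul_one 1 s)
  have h0 := hshift 0
  simp only [Complex.ofReal_zero, zero_smul, add_zero] at h0
  rw [h0, hshift]
  exact prod_le_prod (fun i _ => hA.eigenvalues_nonneg i) fun i _ => le_add_of_nonneg_right hε

theorem Matrix.PosSemidef.choose_mul_rpow_mul_rpow_le_sum_mul_re_det_add_smul_one {ι : Type*}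
    [Fintype ι] [DecidableEq ι] {n k : ℕ} (hι : Fintype.card ι = n) (hn : 0 < n) (hk : k ≤ n)
    {A B : Matrix ι ι ℂ} (hA : A.PosSemidef) (hB : B.PosSemidef) {a b : ℝ} (ha : 0 ≤ a)
    (hb : 0 ≤ b) (hdetA : a ≤ A.det.re) (hdetB : b ≤ B.det.re) {w : ℕ → ℝ}
    (hw : ∀ d : ℕ → ℝ, ∑ j ∈ range (n + 1), w j * ∑ m ∈ range (n + 1), d m * (j : ℝ) ^ m = d k)
    {ε : ℝ} (hε : 0 < ε) :
    (n.choose k : ℝ) * a ^ ((k : ℝ) / n) * b ^ (((n - k : ℕ) : ℝ) / n)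
      ≤ ∑ j ∈ range (n + 1), w j * ((j : ℂ) • (A + (ε : ℂ) • 1) + (B + (ε : ℂ) • 1)).det.re := by
  have hεI : ((ε : ℂ) • (1 : Matrix ι ι ℂ)).PosDef := PosDef.one.smul (Complex.zero_lt_real.mpr hε)
  refine le_trans ?_ <| (PosDef.posSemidef_add hA hεI).posSemidef
    |>.choose_mul_rpow_mul_rpow_le_sum_mul_re_det hι hn hk (PosDef.posSemidef_add hB hεI) hw
  have hAε := hdetA.trans (hA.re_det_le_re_det_add_smul_one hε.le)
  have hBε := hdetB.trans (hB.re_det_le_re_det_add_smul_one hε.le)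
  have hAε_nonneg := ha.trans hAε
  gcongr

/-- Mixed determinant inequality: if `A`, `B` are `n × n` positive semidefinite Hermitian
matrices with `det A ≥ a ≥ 0`, `det B ≥ b ≥ 0`, and `c k` denotes the coefficient of
`t^k s^(n-k)` in `det (t A + s B)`, then the mixed determinant
`D_k(A,B) = c k / (n choose k)` satisfies `D_k(A,B) ≥ a^(k/n) b^((n-k)/n)`. -/
theorem stmt0 (n : ℕ) (hn : 0 < n) (A B : Matrix (Fin n) (Fin n) ℂ)
    (hA : A.PosSemidef) (hB : B.PosSemidef) (a b : ℝ) (ha : 0 ≤ a) (hb : 0 ≤ b)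
    (hdetA : a ≤ A.det.re) (hdetB : b ≤ B.det.re)
    (c : ℕ → ℝ)
    (hc : ∀ t s : ℝ, ((t : ℂ) • A + (s : ℂ) • B).det
      = ∑ m ∈ Finset.range (n + 1), (c m : ℂ) * (t : ℂ) ^ m * (s : ℂ) ^ (n - m))
    (k : ℕ) (hk : k ≤ n) :
    a ^ ((k : ℝ) / n) * b ^ (((n - k : ℕ) : ℝ) / n) ≤ (1 / (n.choose k : ℝ)) * c k := by
  obtain ⟨w, hw⟩ := exists_sum_mul_sum_pow_eq (K := ℝ) hk
  set G : ℝ → ℝ := fun ε => ∑ j ∈ range (n + 1),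
    w j * ((j : ℂ) • (A + (ε : ℂ) • 1) + (B + (ε : ℂ) • 1)).det.re
  have hG : Continuous G := by fun_prop
  have hG0 : G 0 = c k := by
    simp only [G, Complex.ofReal_zero, zero_smul, add_zero, ← hw c]
    refine sum_congr rfl fun j _ => ?_
    have hdet : ((j : ℂ) • A + B).det = ((∑ m ∈ range (n + 1), c m * (j : ℝ) ^ m : ℝ) : ℂ) := by
      simpa using hc j 1
    rw [hdet, Complex.ofReal_re]
  have hGpos (ε : ℝ) (hε : 0 < ε) :
      (n.choose k : ℝ) * a ^ ((k : ℝ) / n) * b ^ (((n - k : ℕ) : ℝ) / n) ≤ G ε :=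
    hA.choose_mul_rpow_mul_rpow_le_sum_mul_re_det_add_smul_one (Fintype.card_fin n) hn hk hB ha hb
      hdetA hdetB hw hε
  have hle := ge_of_tendsto ((hG.tendsto 0).mono_left nhdsWithin_le_nhds)
    (eventually_nhdsWithin_of_forall (s := Set.Ioi 0) hGpos)
  rw [hG0] at hle
  rw [one_div, ← div_eq_inv_mul, le_div_iff₀ (by exact_mod_cast Nat.choose_pos hk)]
  linarith
end

section
/- The function A ↦ det(A)^{1/n} is concave on the cone of n×n positive semidefinite Hermitian matrices: for A, B positive semidefinite and t ∈ [0,1], det(tA + (1-t)B)^{1/n} ≥ t·det(A)^{1/n} + (1-t)·det(B)^{1/n}. -/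
/-!
By homogeneity, `det (t • A) ^ (1/n) = t * det A ^ (1/n)`, so concavity is Minkowski's inequality
`det M ^ (1/n) + det N ^ (1/n) ≤ det (M + N) ^ (1/n)`. If `N` is positive definite, write
`N = S * S` with `S = √N` and `C = S⁻¹ * M * S⁻¹ ⪰ 0` with eigenvalues `λᵢ ≥ 0`; then
`det M = det N * ∏ λᵢ` and `det (M + N) = det N * ∏ (λᵢ + 1)`, so Minkowski's inequality reduces to
the superadditivity of the geometric mean, `(∏ aᵢ)^(1/n) + (∏ bᵢ)^(1/n) ≤ (∏ (aᵢ + bᵢ))^(1/n)`,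
which is the sum of the AM-GM inequalities for `aᵢ / (aᵢ + bᵢ)` and `bᵢ / (aᵢ + bᵢ)`.
If neither matrix is positive definite, both determinants vanish.
-/

open Matrix
open scoped ComplexOrder

theorem Real.geom_mean_add_geom_mean_le {ι : Type*} [Fintype ι] [Nonempty ι] {a b : ι → ℝ}
    (ha : ∀ i, 0 ≤ a i) (hb : ∀ i, 0 ≤ b i) :
    (∏ i, a i) ^ (1 / Fintype.card ι : ℝ) + (∏ i, b i) ^ (1 / Fintype.card ι : ℝ)
      ≤ (∏ i, (a i + b i)) ^ (1 / Fintype.card ι : ℝ) := by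
  set w : ℝ := 1 / Fintype.card ι
  have hw : 0 < w := by positivity
  by_cases hzero : ∃ i, a i + b i = 0
  · obtain ⟨i, hi⟩ := hzero
    have hai : a i = 0 := by linarith [ha i, hb i]
    have hbi : b i = 0 := by linarith [ha i, hb i]
    rw [Finset.prod_eq_zero (Finset.mem_univ i) hai, Finset.prod_eq_zero (Finset.mem_univ i) hbi,
      Real.zero_rpow hw.ne', add_zero]
    exact Real.rpow_nonneg (Finset.prod_nonneg fun j _ => add_nonneg (ha j) (hb j)) _
  push Not at hzero
  have hs : ∀ i, 0 < a i + b i := fun i => (add_nonneg (ha i) (hb i)).lt_of_ne' (hzero i)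
  have hwsum : ∑ _i : ι, w = 1 := by
    simp [w, Finset.card_univ]
  -- for `c = a` and `c = b` the right-hand sides add up to one
  have amgm : ∀ c : ι → ℝ, (∀ i, 0 ≤ c i) →
      (∏ i, c i) ^ w / (∏ i, (a i + b i)) ^ w ≤ ∑ i, w * (c i / (a i + b i)) := by
    intro c hc
    have hnonneg : ∀ i ∈ Finset.univ, 0 ≤ c i / (a i + b i) :=
      fun i _ => div_nonneg (hc i) (hs i).le
    calc (∏ i, c i) ^ w / (∏ i, (a i + b i)) ^ w
        = ∏ i, (c i / (a i + b i)) ^ w := by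
          rw [Real.finsetProd_rpow _ _ hnonneg, Finset.prod_div_distrib,
            Real.div_rpow (Finset.prod_nonneg fun i _ => hc i)
              (Finset.prod_nonneg fun i _ => (hs i).le)]
      _ ≤ ∑ i, w * (c i / (a i + b i)) :=
          Real.geom_mean_le_arith_mean_weighted _ _ _ (fun _ _ => hw.le) hwsum hnonneg
  have hsum : ∑ i, w * (a i / (a i + b i)) + ∑ i, w * (b i / (a i + b i)) = 1 := by
    rw [← Finset.sum_add_distrib, ← hwsum]
    refine Finset.sum_congr rfl fun i _ => ?_
    field_simp [(hs i).ne']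
  have hP : 0 < (∏ i, (a i + b i)) ^ w :=
    Real.rpow_pos_of_pos (Finset.prod_pos fun i _ => hs i) _
  have := add_le_add (amgm a ha) (amgm b hb)
  rwa [hsum, ← add_div, div_le_one hP] at this

namespace Matrix

variable {𝕜 n : Type*} [RCLike 𝕜] [Fintype n] [DecidableEq n]

theorem IsHermitian.det_add_one {C : Matrix n n 𝕜} (hC : C.IsHermitian) :
    (C + 1).det = ∏ i, ((hC.eigenvalues i + 1 : ℝ) : 𝕜) := by
  have : C + 1 = cfc (fun x : ℝ => x + 1) C := by
    rw [cfc_add .., cfc_id' .., cfc_const_one ..]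
  rw [this, hC.cfc_eq]
  simp [IsHermitian.cfc, -Unitary.conjStarAlgAut_apply]

open scoped MatrixOrder in
theorem PosDef.exists_posSemidef_det_eq {M N : Matrix n n 𝕜} (hM : M.PosSemidef)
    (hN : N.PosDef) : ∃ C : Matrix n n 𝕜, C.PosSemidef ∧
      M.det = N.det * C.det ∧ (M + N).det = N.det * (C + 1).det := by
  set S := CFC.sqrt N
  have hS : S.PosSemidef := (CFC.sqrt_nonneg N).posSemidef
  have hSS : S * S = N := CFC.sqrt_mul_sqrt_self N hN.posSemidef.nonneg
  have hSunit : IsUnit S.det := by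
    rw [isUnit_iff_ne_zero]
    intro h
    exact hN.det_pos.ne' (by rw [← hSS, det_mul, h, mul_zero])
  set C := S⁻¹ * M * S⁻¹
  have hSC : S * C * S = M := by
    simp only [C, ← mul_assoc, mul_nonsing_inv S hSunit, one_mul]
    rw [mul_assoc, nonsing_inv_mul S hSunit, mul_one]
  have hSCS : M + N = S * (C + 1) * S := by
    rw [mul_add, add_mul, mul_one, hSC, hSS]
  have hC : C.PosSemidef := by
    simpa only [hS.1.inv.eq] using hM.mul_mul_conjTranspose_same S⁻¹
  clear_value C
  refine ⟨C, hC, ?_, ?_⟩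
  · rw [← hSS, ← hSC, det_mul, det_mul, det_mul]; ring
  · rw [hSCS, ← hSS, det_mul, det_mul, det_mul]; ring

theorem PosSemidef.re_det_nonneg {A : Matrix n n 𝕜} (hA : A.PosSemidef) : 0 ≤ RCLike.re A.det :=
  RCLike.nonneg_iff.mp hA.det_nonneg |>.1

variable [Nonempty n]

theorem PosSemidef.re_det_ofReal_smul_rpow {A : Matrix n n 𝕜} (hA : A.PosSemidef) {t : ℝ}
    (ht : 0 ≤ t) :
    RCLike.re ((t : 𝕜) • A).det ^ (1 / Fintype.card n : ℝ)
      = t * RCLike.re A.det ^ (1 / Fintype.card n : ℝ) := by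
  rw [det_smul, ← RCLike.ofReal_pow, RCLike.re_ofReal_mul,
    Real.mul_rpow (pow_nonneg ht _) hA.re_det_nonneg, one_div,
    Real.pow_rpow_inv_natCast ht Fintype.card_ne_zero]

theorem PosSemidef.re_det_rpow_add_le_of_posDef {M N : Matrix n n 𝕜} (hM : M.PosSemidef)
    (hN : N.PosDef) :
    RCLike.re M.det ^ (1 / Fintype.card n : ℝ) + RCLike.re N.det ^ (1 / Fintype.card n : ℝ)
      ≤ RCLike.re (M + N).det ^ (1 / Fintype.card n : ℝ) := by
  obtain ⟨C, hC, hMC, hMNC⟩ := hN.exists_posSemidef_det_eq hM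
  set lam := hC.1.eigenvalues
  set d := RCLike.re N.det
  have hd : 0 ≤ d := hN.posSemidef.re_det_nonneg
  have hlam : ∀ i, 0 ≤ lam i := hC.eigenvalues_nonneg
  have hMre : RCLike.re M.det = d * ∏ i, lam i := by
    rw [hMC, hC.1.det_eq_prod_eigenvalues, ← RCLike.ofReal_prod, RCLike.re_mul_ofReal]
  have hMNre : RCLike.re (M + N).det = d * ∏ i, (lam i + 1) := by
    rw [hMNC, hC.1.det_add_one, ← RCLike.ofReal_prod, RCLike.re_mul_ofReal]
  have hgeom := Real.geom_mean_add_geom_mean_le hlam (fun _ => zero_le_one)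
  rw [Finset.prod_const_one, Real.one_rpow] at hgeom
  rw [hMre, hMNre, Real.mul_rpow hd (Finset.prod_nonneg fun i _ => hlam i),
    Real.mul_rpow hd (Finset.prod_nonneg fun i _ => add_nonneg (hlam i) zero_le_one)]
  have := mul_le_mul_of_nonneg_left hgeom (Real.rpow_nonneg hd (1 / Fintype.card n : ℝ))
  linarith

theorem PosSemidef.re_det_rpow_add_le {M N : Matrix n n 𝕜} (hM : M.PosSemidef)
    (hN : N.PosSemidef) :
    RCLike.re M.det ^ (1 / Fintype.card n : ℝ) + RCLike.re N.det ^ (1 / Fintype.card n : ℝ)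
      ≤ RCLike.re (M + N).det ^ (1 / Fintype.card n : ℝ) := by
  by_cases hNdef : N.PosDef
  · exact hM.re_det_rpow_add_le_of_posDef hNdef
  by_cases hMdef : M.PosDef
  · rw [add_comm, add_comm M]
    exact hN.re_det_rpow_add_le_of_posDef hMdef
  rw [hN.posDef_iff_det_ne_zero, not_not] at hNdef
  rw [hM.posDef_iff_det_ne_zero, not_not] at hMdef
  rw [hMdef, hNdef, map_zero, Real.zero_rpow (by positivity), add_zero]
  exact Real.rpow_nonneg (hM.add hN).re_det_nonneg _

end Matrix

/-- Concavity of `A ↦ det(A)^(1/n)` on the cone of positive semidefinite Hermitian matrices. -/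
theorem stmt2 (n : ℕ) (hn : 0 < n) (A B : Matrix (Fin n) (Fin n) ℂ)
    (hA : A.PosSemidef) (hB : B.PosSemidef) (t : ℝ) (ht0 : 0 ≤ t) (ht1 : t ≤ 1) :
    t * A.det.re ^ ((1 : ℝ) / n) + (1 - t) * B.det.re ^ ((1 : ℝ) / n)
      ≤ ((t : ℂ) • A + ((1 - t : ℝ) : ℂ) • B).det.re ^ ((1 : ℝ) / n) := by
  have : Nonempty (Fin n) := Fin.pos_iff_nonempty.mp hn
  have ht1' : 0 ≤ 1 - t := sub_nonneg.mpr ht1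
  have hmink := (hA.smul ((RCLike.ofReal_nonneg (K := ℂ)).mpr ht0)).re_det_rpow_add_le
    (hB.smul ((RCLike.ofReal_nonneg (K := ℂ)).mpr ht1'))
  rwa [hA.re_det_ofReal_smul_rpow ht0, hB.re_det_ofReal_smul_rpow ht1', Fintype.card_fin] at hmink
end

section
/- For 2×2 positive semidefinite Hermitian matrices A, B with det(A) ≥ a and det(B) ≥ b (a, b ≥ 0), the mixed determinant D_1(A,B) := (det(A+B) − det(A) − det(B))/2 satisfies D_1(A,B) ≥ √(ab). -/
open Matrix
open scoped ComplexOrder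

/-! In coordinates `A = [[p, z], [z̄, q]]`, `B = [[r, w], [w̄, s]]` one has
`D₁(A, B) = (p s + q r)/2 - Re (z w̄)`. AM–GM gives `(p s + q r)/2 ≥ √(p q) √(r s)`, and
`Re (z w̄) ≤ |z| |w|`; it remains to see `√(p q) √(r s) - |z| |w| ≥ √(det A det B)`, which is
Aczél's reverse Cauchy–Schwarz inequality `(u v - x y)² - (u² - x²)(v² - y²) = (u y - v x)²`. -/

lemma Real.sqrt_mul_sub_sq_le {u v x y : ℝ} (hx : 0 ≤ x) (hy : 0 ≤ y) (hxu : x ≤ u)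
    (hyv : y ≤ v) : √((u ^ 2 - x ^ 2) * (v ^ 2 - y ^ 2)) ≤ u * v - x * y := by
  have hxy : x * y ≤ u * v := mul_le_mul hxu hyv hy (hx.trans hxu)
  rw [Real.sqrt_le_left (by linarith)]
  nlinarith [sq_nonneg (u * y - v * x)]

lemma Real.sqrt_mul_sub_sq_le_of_sq_le {p q r s x y : ℝ} (hp : 0 ≤ p) (hq : 0 ≤ q)
    (hr : 0 ≤ r) (hs : 0 ≤ s) (hx : 0 ≤ x) (hy : 0 ≤ y) (hxpq : x ^ 2 ≤ p * q)
    (hyrs : y ^ 2 ≤ r * s) :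
    √((p * q - x ^ 2) * (r * s - y ^ 2)) ≤ (p * s + q * r) / 2 - x * y := by
  have hpq := Real.sq_sqrt (mul_nonneg hp hq)
  have hrs := Real.sq_sqrt (mul_nonneg hr hs)
  have am_gm : √(p * q) * √(r * s) ≤ (p * s + q * r) / 2 := by
    rw [← Real.sqrt_mul (mul_nonneg hp hq), Real.sqrt_le_left (by positivity)]
    nlinarith [sq_nonneg (p * s - q * r)]
  calc √((p * q - x ^ 2) * (r * s - y ^ 2))
      = √((√(p * q) ^ 2 - x ^ 2) * (√(r * s) ^ 2 - y ^ 2)) := by rw [hpq, hrs]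
    _ ≤ √(p * q) * √(r * s) - x * y :=
        Real.sqrt_mul_sub_sq_le hx hy (Real.le_sqrt_of_sq_le hxpq) (Real.le_sqrt_of_sq_le hyrs)
    _ ≤ (p * s + q * r) / 2 - x * y := by linarith

namespace Matrix.IsHermitian

variable {A B : Matrix (Fin 2) (Fin 2) ℂ}

lemma eq_fin_two (hA : A.IsHermitian) :
    A = !![((A 0 0).re : ℂ), A 0 1; starRingEnd ℂ (A 0 1), ((A 1 1).re : ℂ)] := by
  ext i j
  fin_cases i <;> fin_cases j
  · exact (hA.coe_re_apply_self 0).symm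
  · rfl
  · exact (hA.apply 1 0).symm
  · exact (hA.coe_re_apply_self 1).symm

lemma re_det_fin_two (hA : A.IsHermitian) :
    A.det.re = (A 0 0).re * (A 1 1).re - ‖A 0 1‖ ^ 2 := by
  rw [hA.eq_fin_two, det_fin_two_of]
  simp [Complex.mul_re, Complex.sq_norm, Complex.normSq_apply]

lemma re_det_add_fin_two (hA : A.IsHermitian) (hB : B.IsHermitian) :
    (A + B).det.re = A.det.re + B.det.re + (A 0 0).re * (B 1 1).re + (A 1 1).re * (B 0 0).re
      - 2 * (A 0 1 * starRingEnd ℂ (B 0 1)).re := by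
  rw [hA.eq_fin_two, hB.eq_fin_two]
  simp [det_fin_two_of, Complex.mul_re]
  ring

end Matrix.IsHermitian

namespace Matrix.PosSemidef

variable {A B : Matrix (Fin 2) (Fin 2) ℂ}

lemma re_diag_nonneg (hA : A.PosSemidef) (i : Fin 2) : 0 ≤ (A i i).re :=
  (Complex.nonneg_iff.mp hA.diag_nonneg).1

lemma re_det_nonneg_s8 (hA : A.PosSemidef) : 0 ≤ A.det.re :=
  (Complex.nonneg_iff.mp hA.det_nonneg).1

lemma sqrt_re_det_mul_re_det_le (hA : A.PosSemidef) (hB : B.PosSemidef) :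
    √(A.det.re * B.det.re) ≤ ((A + B).det.re - A.det.re - B.det.re) / 2 := by
  have hdetA := hA.1.re_det_fin_two
  have hdetB := hB.1.re_det_fin_two
  have hcross : (A 0 1 * starRingEnd ℂ (B 0 1)).re ≤ ‖A 0 1‖ * ‖B 0 1‖ := by
    simpa using Complex.re_le_norm (A 0 1 * starRingEnd ℂ (B 0 1))
  have key := Real.sqrt_mul_sub_sq_le_of_sq_le (hA.re_diag_nonneg 0) (hA.re_diag_nonneg 1)
    (hB.re_diag_nonneg 0) (hB.re_diag_nonneg 1) (norm_nonneg (A 0 1)) (norm_nonneg (B 0 1))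
    (by linarith [hA.re_det_nonneg_s8]) (by linarith [hB.re_det_nonneg_s8])
  rw [← hdetA, ← hdetB] at key
  rw [hA.1.re_det_add_fin_two hB.1]
  linarith

end Matrix.PosSemidef

theorem stmt8_general (A B : Matrix (Fin 2) (Fin 2) ℂ)
    (hA : A.PosSemidef) (hB : B.PosSemidef) (a b : ℝ) (hb : 0 ≤ b)
    (hdetA : a ≤ A.det.re) (hdetB : b ≤ B.det.re) :
    Real.sqrt (a * b) ≤ ((A + B).det.re - A.det.re - B.det.re) / 2 :=
  calc √(a * b) ≤ √(A.det.re * B.det.re) :=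
        Real.sqrt_le_sqrt (mul_le_mul hdetA hdetB hb hA.re_det_nonneg_s8)
    _ ≤ ((A + B).det.re - A.det.re - B.det.re) / 2 := hA.sqrt_re_det_mul_re_det_le hB

/-- For 2×2 positive semidefinite Hermitian matrices `A`, `B` with `det A ≥ a ≥ 0` and
`det B ≥ b ≥ 0`, the mixed determinant `D₁(A,B) = (det(A+B) − det A − det B)/2`
satisfies `D₁(A,B) ≥ √(ab)`. -/
theorem stmt8 (A B : Matrix (Fin 2) (Fin 2) ℂ)
    (hA : A.PosSemidef) (hB : B.PosSemidef) (a b : ℝ) (ha : 0 ≤ a) (hb : 0 ≤ b)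
    (hdetA : a ≤ A.det.re) (hdetB : b ≤ B.det.re) :
    Real.sqrt (a * b) ≤ ((A + B).det.re - A.det.re - B.det.re) / 2 :=
  stmt8_general A B hA hB a b hb hdetA hdetB
end

section
/- Define the convex piecewise-linear function ũ(x,y) = max{x/k, k²y, −j} on ℝ² for real k > 0 and j > 0. The subgradient image of ũ over the quadrant {x ≤ 0, y ≤ 0} (i.e. the union of subdifferentials ∂ũ(w) over w in the quadrant) equals the closed triangle with vertices (1/k, 0), (0, k²), (0, 0), and its Lebesgue measure is k/2. -/
/-!
The function `max (a x) (b y) (-j)` is monotone in each coordinate and grows by at most `1` under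
the shift `(1/a, 1/b)`; testing the subgradient inequality in the directions `-e₁`, `-e₂` and
`(1/a, 1/b)` confines every subgradient to the triangle with vertices `(a, 0)`, `(0, b)`, `(0, 0)`.
Conversely, at `(-j/a, -j/b)` all three affine pieces take the value `-j`, so every convex
combination of their gradients, i.e. every point of the triangle, is a subgradient there.
The area `a b / 2` is the integral of `b (1 - x/a)` over `[0, a]`.
For `ũ` one takes `a = 1/k` and `b = k²`.
-/

open MeasureTheory Set

lemma volume_region_between_cc_eq_volume_regionBetween {α : Type*} [MeasurableSpace α]
    {μ : Measure α} {f g : α → ℝ} {s : Set α}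
    (hf : Measurable f) (hg : Measurable g) (hs : MeasurableSet s) :
    μ.prod volume {p : α × ℝ | p.1 ∈ s ∧ p.2 ∈ Icc (f p.1) (g p.1)}
      = μ.prod volume (regionBetween f g s) := by
  rw [Measure.prod_apply (measurableSet_region_between_cc hf hg hs),
    Measure.prod_apply (measurableSet_regionBetween hf hg hs)]
  congr 1 with x
  by_cases hx : x ∈ s
  · simp only [regionBetween, preimage_ofPred_eq, hx, true_and, ofPred_mem_eq, Real.volume_Icc,
      Real.volume_Ioo]
  · simp [regionBetween, hx]

lemma smul_add_smul_mem_convexHull {E : Type*} [AddCommGroup E] [Module ℝ E] (x y : E)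
    {μ ν : ℝ} (hμ : 0 ≤ μ) (hν : 0 ≤ ν) (hμν : μ + ν ≤ 1) :
    μ • x + ν • y ∈ convexHull ℝ {x, y, 0} := by
  have := (convex_convexHull ℝ {x, y, 0}).sum_mem (t := Finset.univ) (w := ![μ, ν, 1 - μ - ν])
    (z := ![x, y, 0]) (by simp [Fin.forall_fin_succ, hμ, hν, sub_sub, hμν])
    (by simp [Fin.sum_univ_three])
    (fun i _ => subset_convexHull ℝ _ (by fin_cases i <;> simp))
  simpa [Fin.sum_univ_three] using this

def rightTriangle (a b : ℝ) : Set (ℝ × ℝ) :=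
  {t | 0 ≤ t.1 ∧ 0 ≤ t.2 ∧ t.1 / a + t.2 / b ≤ 1}

/-- `ℝ × ℝ` has the sup norm and no inner product, so the Euclidean pairing is written out. -/
def subdifferential (f : ℝ × ℝ → ℝ) (w : ℝ × ℝ) : Set (ℝ × ℝ) :=
  {t | ∀ s : ℝ × ℝ, f w + ((s.1 - w.1) * t.1 + (s.2 - w.2) * t.2) ≤ f s}

def maxAffine (a b j : ℝ) (w : ℝ × ℝ) : ℝ :=
  max (max (a * w.1) (b * w.2)) (-j)

lemma convex_rightTriangle (a b : ℝ) : Convex ℝ (rightTriangle a b) :=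
  (convex_halfSpace_ge (LinearMap.fst ℝ ℝ ℝ).isLinear 0).inter <|
    (convex_halfSpace_ge (LinearMap.snd ℝ ℝ ℝ).isLinear 0).inter <|
      convex_halfSpace_le (f := fun t : ℝ × ℝ => t.1 / a + t.2 / b)
        ⟨fun x y => by simp only [Prod.fst_add, Prod.snd_add]; ring,
        fun c x => by simp only [Prod.smul_fst, Prod.smul_snd, smul_eq_mul]; ring⟩ 1

section RightTriangle

variable {a b : ℝ}

lemma convexHull_eq_rightTriangle (ha : 0 < a) (hb : 0 < b) :
    convexHull ℝ {(a, 0), (0, b), (0, 0)} = rightTriangle a b := by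
  refine (convexHull_min ?_ (convex_rightTriangle a b)).antisymm ?_
  · rintro t (rfl | rfl | rfl) <;> simp [rightTriangle, ha.le, hb.le, ha.ne', hb.ne']
  · rintro t ⟨h1, h2, h3⟩
    have hbary : t = (t.1 / a) • (a, 0) + (t.2 / b) • (0, b) := by
      ext <;> simp [ha.ne', hb.ne']
    rw [hbary]
    exact smul_add_smul_mem_convexHull _ _ (by positivity) (by positivity) h3

lemma volume_rightTriangle (ha : 0 < a) (hb : 0 < b) :
    volume (rightTriangle a b) = ENNReal.ofReal (a * b / 2) := by
  set g : ℝ → ℝ := fun x => b * (1 - x / a)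
  have hregion : rightTriangle a b
      = {p : ℝ × ℝ | p.1 ∈ Icc 0 a ∧ p.2 ∈ Icc ((0 : ℝ → ℝ) p.1) (g p.1)} := by
    ext ⟨x, y⟩
    have hy : y ≤ g x ↔ x / a + y / b ≤ 1 := by
      rw [← div_le_iff₀' hb]; constructor <;> intro <;> linarith
    simp only [rightTriangle, mem_ofPred_eq, mem_Icc, Pi.zero_apply, hy, ← div_le_one ha]
    constructor
    · rintro ⟨hx, hy₀, h⟩
      exact ⟨⟨hx, by linarith [div_nonneg hy₀ hb.le]⟩, hy₀, h⟩
    · rintro ⟨⟨hx, -⟩, hy₀, h⟩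
      exact ⟨hx, hy₀, h⟩
  have hg : ∀ x ∈ Icc 0 a, (0 : ℝ → ℝ) x ≤ g x := fun x hx =>
    mul_nonneg hb.le (sub_nonneg.2 ((div_le_one ha).2 hx.2))
  rw [hregion, Measure.volume_eq_prod, volume_region_between_cc_eq_volume_regionBetween
    (f := 0) (g := g) (s := Icc 0 a) measurable_const (by fun_prop) measurableSet_Icc,
    volume_regionBetween_eq_integral (f := 0) integrableOn_zero
      (by fun_prop : Continuous g).integrableOn_Icc measurableSet_Icc hg,
    integral_Icc_eq_integral_Ioc, ← intervalIntegral.integral_of_le ha.le]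
  congr 1
  simp only [g, Pi.sub_apply, Pi.zero_apply, sub_zero, intervalIntegral.integral_const_mul,
    intervalIntegral.integral_sub intervalIntegrable_const
      (intervalIntegral.intervalIntegrable_id.div_const a),
    intervalIntegral.integral_const, intervalIntegral.integral_div, integral_id, smul_eq_mul]
  field_simp
  ring

end RightTriangle

lemma pairing_le_of_mem_subdifferential {f : ℝ × ℝ → ℝ} {w t : ℝ × ℝ}
    (ht : t ∈ subdifferential f w) (d : ℝ × ℝ) :
    d.1 * t.1 + d.2 * t.2 ≤ f (w + d) - f w := by
  have := ht (w + d)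
  simp only [Prod.fst_add, Prod.snd_add, add_sub_cancel_left] at this
  linarith

section MaxAffine

variable {a b j : ℝ}

lemma maxAffine_mono (ha : 0 ≤ a) (hb : 0 ≤ b) : Monotone (maxAffine a b j) :=
  fun _ _ h => max_le_max (max_le_max (mul_le_mul_of_nonneg_left h.1 ha)
    (mul_le_mul_of_nonneg_left h.2 hb)) le_rfl

lemma maxAffine_add_inv_le (ha : a ≠ 0) (hb : b ≠ 0) (w : ℝ × ℝ) :
    maxAffine a b j (w + (a⁻¹, b⁻¹)) ≤ maxAffine a b j w + 1 := by
  simp only [maxAffine, Prod.fst_add, Prod.snd_add, mul_add, mul_inv_cancel₀ ha,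
    mul_inv_cancel₀ hb]
  rw [max_add_add_right]
  exact max_le (by grw [← le_max_left _ (-j)])
    (by linarith [le_max_right (max (a * w.1) (b * w.2)) (-j)])

lemma maxAffine_neg_div (ha : a ≠ 0) (hb : b ≠ 0) :
    maxAffine a b j (-j / a, -j / b) = -j := by
  simp [maxAffine, mul_div_cancel₀, ha, hb]

lemma subdifferential_maxAffine_subset (ha : 0 < a) (hb : 0 < b) (w : ℝ × ℝ) :
    subdifferential (maxAffine a b j) w ⊆ rightTriangle a b := by
  intro t ht
  have hmono := maxAffine_mono (j := j) ha.le hb.le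
  refine ⟨?_, ?_, ?_⟩
  · have h := pairing_le_of_mem_subdifferential ht (-1, 0)
    have hle : maxAffine a b j (w + (-1, 0)) ≤ maxAffine a b j w :=
      hmono (add_le_of_nonpos_right ⟨by norm_num, le_rfl⟩)
    simp only at h
    linarith
  · have h := pairing_le_of_mem_subdifferential ht (0, -1)
    have hle : maxAffine a b j (w + (0, -1)) ≤ maxAffine a b j w :=
      hmono (add_le_of_nonpos_right ⟨le_rfl, by norm_num⟩)
    simp only at h
    linarith
  · have h := pairing_le_of_mem_subdifferential ht (a⁻¹, b⁻¹)
    have hle := maxAffine_add_inv_le (j := j) ha.ne' hb.ne' w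
    simp only [div_eq_inv_mul] at h ⊢
    linarith

lemma rightTriangle_subset_subdifferential_maxAffine (ha : 0 < a) (hb : 0 < b) :
    rightTriangle a b ⊆ subdifferential (maxAffine a b j) (-j / a, -j / b) := by
  rintro t ⟨h1, h2, h3⟩ s
  rw [maxAffine_neg_div ha.ne' hb.ne']
  have hcomb : -j + ((s.1 - -j / a) * t.1 + (s.2 - -j / b) * t.2)
      = t.1 / a * (a * s.1) + t.2 / b * (b * s.2) + (1 - t.1 / a - t.2 / b) * -j := by
    field_simp; ring
  rw [hcomb]
  have hs1 : a * s.1 ≤ maxAffine a b j s := (le_max_left _ _).trans (le_max_left _ _)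
  have hs2 : b * s.2 ≤ maxAffine a b j s := (le_max_right _ _).trans (le_max_left _ _)
  have hs3 : -j ≤ maxAffine a b j s := le_max_right _ _
  have := mul_le_mul_of_nonneg_left hs1 (div_nonneg h1 ha.le)
  have := mul_le_mul_of_nonneg_left hs2 (div_nonneg h2 hb.le)
  have := mul_le_mul_of_nonneg_left hs3 (by linarith : 0 ≤ 1 - t.1 / a - t.2 / b)
  linarith

lemma iUnion_subdifferential_maxAffine (ha : 0 < a) (hb : 0 < b) (hj : 0 ≤ j) :
    ⋃ w ∈ {w : ℝ × ℝ | w.1 ≤ 0 ∧ w.2 ≤ 0}, subdifferential (maxAffine a b j) w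
      = rightTriangle a b :=
  (iUnion₂_subset fun w _ => subdifferential_maxAffine_subset ha hb w).antisymm <|
    (rightTriangle_subset_subdifferential_maxAffine ha hb).trans <|
      subset_biUnion_of_mem (u := fun w => subdifferential (maxAffine a b j) w)
        ⟨div_nonpos_of_nonpos_of_nonneg (neg_nonpos.2 hj) ha.le,
          div_nonpos_of_nonpos_of_nonneg (neg_nonpos.2 hj) hb.le⟩

end MaxAffine

/-- The subgradient image of `ũ(x,y) = max{x/k, k²y, −j}` over the quadrant
`{x ≤ 0, y ≤ 0}` is the closed triangle with vertices `(1/k, 0)`, `(0, k²)`, `(0, 0)`,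
and its Lebesgue measure is `k/2`. -/
theorem stmt9 (k j : ℝ) (hk : 0 < k) (hj : 0 < j) :
    (⋃ w ∈ {w : ℝ × ℝ | w.1 ≤ 0 ∧ w.2 ≤ 0},
        {t : ℝ × ℝ | ∀ s : ℝ × ℝ,
          max (max (w.1 / k) (k ^ 2 * w.2)) (-j) + ((s.1 - w.1) * t.1 + (s.2 - w.2) * t.2)
            ≤ max (max (s.1 / k) (k ^ 2 * s.2)) (-j)})
      = convexHull ℝ {((1 / k : ℝ), (0 : ℝ)), ((0 : ℝ), k ^ 2), ((0 : ℝ), (0 : ℝ))}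
    ∧ volume (convexHull ℝ {((1 / k : ℝ), (0 : ℝ)), ((0 : ℝ), k ^ 2), ((0 : ℝ), (0 : ℝ))})
        = ENNReal.ofReal (k / 2) := by
  have ha : 0 < 1 / k := by positivity
  rw [convexHull_eq_rightTriangle ha (by positivity), volume_rightTriangle ha (by positivity),
    ← iUnion_subdifferential_maxAffine ha (by positivity) hj.le]
  refine ⟨by simp only [subdifferential, maxAffine, one_div_mul_eq_div], ?_⟩
  congr 1
  field_simp
end

section
/- Let μ be a positive measure on a cube I, f, g ∈ L^1(μ) nonnegative, and let I be partitioned into boxes I_1, …, I_N of positive Lebesgue measure. Define ν := Σ_j (∫_{I_j} f dμ)^{k/n}(∫_{I_j} g dμ)^{(n-k)/n} / λ(I_j) · χ_{I_j} λ. Then ν ≥ Σ_j (∫_{I_j} f^{k/n} g^{(n-k)/n} dμ)/λ(I_j) · χ_{I_j} λ, and as the partition is refined (with mesh → 0 and boundaries μ-null) the right-hand side converges weakly* to f^{k/n} g^{(n-k)/n} μ. -/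
open MeasureTheory Filter Topology
open scoped ENNReal

/-!
On each cell, Hölder's inequality with exponents `k/n` and `(n-k)/n` compares the two weights.
For the convergence, integrating a test function `χ` against the approximant replaces `χ` on each
cell by its average, which differs from `χ` by at most the oscillation of `χ` on that cell. Hence
the error against `∫ χ φ dμ` is at most the largest oscillation times `∫ φ dμ`, and this tends to
zero by uniform continuity of `χ` as the mesh tends to zero.
-/

namespace MeasureTheory

section Holder

variable {α : Type*} [MeasurableSpace α] {μ : Measure α} {f g : α → ℝ} {p q : ℝ}

theorem Integrable.rpow_mul_rpow (hf : Integrable f μ) (hg : Integrable g μ)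
    (hf0 : 0 ≤ᵐ[μ] f) (hg0 : 0 ≤ᵐ[μ] g) (hp : 0 ≤ p) (hq : 0 ≤ q) (hpq : p + q = 1) :
    Integrable (fun x => f x ^ p * g x ^ q) μ := by
  have hfm := hf.aemeasurable
  have hgm := hg.aemeasurable
  refine ((hf.const_mul p).add (hg.const_mul q)).mono'
    (by fun_prop : AEMeasurable (fun x => f x ^ p * g x ^ q) μ).aestronglyMeasurable ?_
  filter_upwards [hf0, hg0] with x hfx hgx
  rw [Real.norm_of_nonneg (mul_nonneg (Real.rpow_nonneg hfx p) (Real.rpow_nonneg hgx q))]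
  exact Real.geom_mean_le_arith_mean2_weighted hp hq hfx hgx hpq

theorem integral_rpow_mul_rpow_le (hf : Integrable f μ) (hg : Integrable g μ)
    (hf0 : 0 ≤ᵐ[μ] f) (hg0 : 0 ≤ᵐ[μ] g) (hp : 0 ≤ p) (hq : 0 ≤ q) (hpq : p + q = 1) :
    ∫ x, f x ^ p * g x ^ q ∂μ ≤ (∫ x, f x ∂μ) ^ p * (∫ x, g x ∂μ) ^ q := by
  have hfg0 : 0 ≤ᵐ[μ] fun x => f x ^ p * g x ^ q := by
    filter_upwards [hf0, hg0] with x hfx hgx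
    exact mul_nonneg (Real.rpow_nonneg hfx p) (Real.rpow_nonneg hgx q)
  rw [integral_eq_lintegral_of_nonneg_ae hfg0 (hf.rpow_mul_rpow hg hf0 hg0 hp hq hpq).1,
    integral_eq_lintegral_of_nonneg_ae hf0 hf.1, integral_eq_lintegral_of_nonneg_ae hg0 hg.1,
    ENNReal.toReal_rpow, ENNReal.toReal_rpow, ← ENNReal.toReal_mul]
  refine ENNReal.toReal_mono ?_ ((lintegral_congr_ae ?_).trans_le
    (ENNReal.lintegral_mul_norm_pow_le hf.aemeasurable.ennreal_ofReal
      hg.aemeasurable.ennreal_ofReal hp hq hpq))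
  · exact ENNReal.mul_ne_top (ENNReal.rpow_ne_top_of_nonneg hp hf.lintegral_lt_top.ne)
      (ENNReal.rpow_ne_top_of_nonneg hq hg.lintegral_lt_top.ne)
  · filter_upwards [hf0, hg0] with x hfx hgx
    rw [ENNReal.ofReal_mul (Real.rpow_nonneg hfx p), ENNReal.ofReal_rpow_of_nonneg hfx hp,
      ENNReal.ofReal_rpow_of_nonneg hgx hq]

end Holder

variable {X : Type*} [MeasurableSpace X]

theorem abs_const_mul_integral_sub_integral_mul_le {μ : Measure X} {φ χ : X → ℝ} {b ε : ℝ}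
    (hφ0 : 0 ≤ φ) (hφ : Integrable φ μ) (hχφ : Integrable (fun x => χ x * φ x) μ)
    (hb : ∀ᵐ x ∂μ, |b - χ x| ≤ ε) :
    |b * ∫ x, φ x ∂μ - ∫ x, χ x * φ x ∂μ| ≤ ε * ∫ x, φ x ∂μ := by
  rw [← integral_const_mul b, ← integral_sub (hφ.const_mul b) hχφ, ← integral_const_mul ε,
    ← Real.norm_eq_abs]
  refine norm_integral_le_of_norm_le (hφ.const_mul ε) ?_
  filter_upwards [hb] with x hx
  rw [← sub_mul, Real.norm_eq_abs, abs_mul, abs_of_nonneg (hφ0 x)]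
  exact mul_le_mul_of_nonneg_right hx (hφ0 x)

theorem abs_setAverage_sub_le {ν : Measure X} {s : Set X} {χ : X → ℝ} {ε : ℝ} {x : X}
    (hs0 : ν s ≠ 0) (hs : ν s ≠ ∞) (hχ : IntegrableOn χ s ν)
    (hosc : ∀ y ∈ s, |χ y - χ x| ≤ ε) :
    |(⨍ y in s, χ y ∂ν) - χ x| ≤ ε := by
  obtain ⟨y₁, hy₁, hle⟩ := exists_le_setAverage hs0 hs hχ
  obtain ⟨y₂, hy₂, hge⟩ := exists_setAverage_le hs0 hs hχ
  have h₁ := abs_le.1 (hosc y₁ hy₁)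
  have h₂ := abs_le.1 (hosc y₂ hy₂)
  exact abs_le.2 ⟨by linarith, by linarith⟩

theorem hasSum_setIntegral_of_ae_mem_iUnion {μ : Measure X} {c : ℕ → Set X} {F : X → ℝ}
    (hc : ∀ j, MeasurableSet (c j)) (hdisj : Pairwise fun i j => Disjoint (c i) (c j))
    (hcover : ∀ᵐ x ∂μ, x ∈ ⋃ j, c j) (hF : Integrable F μ) :
    HasSum (fun j => ∫ x in c j, F x ∂μ) (∫ x, F x ∂μ) := by
  simpa only [Measure.restrict_eq_self_of_ae_mem hcover] using
    hasSum_integral_iUnion hc hdisj hF.integrableOn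

theorem integral_withDensity_ofReal {μ : Measure X} {φ : X → ℝ} (hφ0 : 0 ≤ φ)
    (hφ : AEMeasurable φ μ) (χ : X → ℝ) :
    ∫ x, χ x ∂μ.withDensity (fun x => ENNReal.ofReal (φ x)) = ∫ x, χ x * φ x ∂μ := by
  rw [integral_withDensity_eq_integral_toReal_smul₀ hφ.ennreal_ofReal
    (ae_of_all _ fun _ => ENNReal.ofReal_lt_top)]
  simp_rw [ENNReal.toReal_ofReal (hφ0 _), smul_eq_mul, mul_comm]

namespace Measure

/-- The paper's canonical approximant `∑ⱼ wⱼ / λ(Iⱼ) · χ_{Iⱼ} λ`, with `ν` in the role of `λ`. -/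
noncomputable def cellMeasure (ν : Measure X) (c : ℕ → Set X) (w : ℕ → ℝ≥0∞) : Measure X :=
  Measure.sum fun j => (w j / ν (c j)) • ν.restrict (c j)

variable {ν : Measure X} {c : ℕ → Set X}

theorem cellMeasure_mono {w w' : ℕ → ℝ≥0∞} (h : ∀ j, w j ≤ w' j) :
    cellMeasure ν c w ≤ cellMeasure ν c w' := by
  refine Measure.le_iff.2 fun s hs => ?_
  simp only [cellMeasure, Measure.sum_apply _ hs, Measure.smul_apply, smul_eq_mul]
  exact ENNReal.tsum_le_tsum fun j => by gcongr; exact h j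

theorem cellMeasure_apply_univ (hν0 : ∀ j, ν (c j) ≠ 0) (hν : ∀ j, ν (c j) ≠ ∞)
    (w : ℕ → ℝ≥0∞) : cellMeasure ν c w Set.univ = ∑' j, w j := by
  simp only [cellMeasure, Measure.sum_apply _ MeasurableSet.univ, Measure.smul_apply,
    smul_eq_mul, Measure.restrict_apply_univ, ENNReal.div_mul_cancel (hν0 _) (hν _)]

theorem hasSum_integral_cellMeasure {w : ℕ → ℝ≥0∞} {χ : X → ℝ}
    (hχ : Integrable χ (cellMeasure ν c w)) :
    HasSum (fun j => (w j).toReal * ⨍ x in c j, χ x ∂ν) (∫ x, χ x ∂cellMeasure ν c w) := by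
  have hterm : ∀ j, ∫ x, χ x ∂((w j / ν (c j)) • ν.restrict (c j))
      = (w j).toReal * ⨍ x in c j, χ x ∂ν := fun j => by
    rw [integral_smul_measure, setAverage_eq, ENNReal.toReal_div, smul_eq_mul, smul_eq_mul,
      measureReal_def]
    ring
  have h := hasSum_integral_measure hχ
  simp only [hterm] at h
  exact h

theorem abs_integral_cellMeasure_sub_le {μ : Measure X} {φ χ : X → ℝ} {C ε : ℝ}
    (hc : ∀ j, MeasurableSet (c j)) (hdisj : Pairwise fun i j => Disjoint (c i) (c j))
    (hcover : ∀ᵐ x ∂μ, x ∈ ⋃ j, c j) (hν0 : ∀ j, ν (c j) ≠ 0) (hν : ∀ j, ν (c j) ≠ ∞)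
    (hφ0 : 0 ≤ φ) (hφ : Integrable φ μ) (hχm : StronglyMeasurable χ) (hχC : ∀ x, ‖χ x‖ ≤ C)
    (hosc : ∀ j, ∀ x ∈ c j, ∀ y ∈ c j, |χ y - χ x| ≤ ε) :
    |∫ x, χ x ∂cellMeasure ν c (fun j => ENNReal.ofReal (∫ x in c j, φ x ∂μ))
      - ∫ x, χ x * φ x ∂μ| ≤ ε * ∫ x, φ x ∂μ := by
  have hA0 : ∀ j, 0 ≤ ∫ x in c j, φ x ∂μ := fun j => setIntegral_nonneg (hc j) fun x _ => hφ0 x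
  have hA := hasSum_setIntegral_of_ae_mem_iUnion hc hdisj hcover hφ
  have hχφ : Integrable (fun x => χ x * φ x) μ :=
    hφ.bdd_mul hχm.aestronglyMeasurable (ae_of_all _ hχC)
  have : IsFiniteMeasure (cellMeasure ν c fun j => ENNReal.ofReal (∫ x in c j, φ x ∂μ)) := by
    constructor
    rw [cellMeasure_apply_univ hν0 hν, ← ENNReal.ofReal_tsum_of_nonneg hA0 hA.summable]
    exact ENNReal.ofReal_lt_top
  have hχ : Integrable χ (cellMeasure ν c fun j => ENNReal.ofReal (∫ x in c j, φ x ∂μ)) :=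
    .of_bound hχm.aestronglyMeasurable C (ae_of_all _ hχC)
  have hB := hasSum_setIntegral_of_ae_mem_iUnion hc hdisj hcover hχφ
  refine ((hasSum_integral_cellMeasure hχ).sub hB).norm_le_of_bounded (hA.mul_left ε) fun j => ?_
  have hχj : IntegrableOn χ (c j) ν := IntegrableOn.of_bound (hν j).lt_top
    hχm.aestronglyMeasurable C (ae_of_all _ hχC)
  rw [ENNReal.toReal_ofReal (hA0 j), Real.norm_eq_abs, mul_comm]
  refine abs_const_mul_integral_sub_integral_mul_le hφ0 hφ.integrableOn hχφ.integrableOn ?_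
  exact (ae_restrict_iff' (hc j)).2 (ae_of_all _ fun x hx =>
    abs_setAverage_sub_le (hν0 j) (hν j) hχj fun y hy => hosc j x hx y hy)

theorem tendsto_integral_cellMeasure [PseudoMetricSpace X] [OpensMeasurableSpace X]
    {ι : Type*} {l : Filter ι} {μ ν : Measure X} {c : ι → ℕ → Set X} {mesh : ι → ℝ}
    {φ χ : X → ℝ} {C : ℝ}
    (hc : ∀ p j, MeasurableSet (c p j)) (hdisj : ∀ p, Pairwise fun i j => Disjoint (c p i) (c p j))
    (hcover : ∀ p, ∀ᵐ x ∂μ, x ∈ ⋃ j, c p j) (hν0 : ∀ p j, ν (c p j) ≠ 0)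
    (hν : ∀ p j, ν (c p j) ≠ ∞) (hbdd : ∀ p j, Bornology.IsBounded (c p j))
    (hmesh : Tendsto mesh l (𝓝 0)) (hdiam : ∀ p j, Metric.diam (c p j) ≤ mesh p)
    (hφ0 : 0 ≤ φ) (hφ : Integrable φ μ) (hχ : UniformContinuous χ) (hχC : ∀ x, ‖χ x‖ ≤ C) :
    Tendsto
      (fun p => ∫ x, χ x ∂cellMeasure ν (c p) fun j => ENNReal.ofReal (∫ x in c p j, φ x ∂μ))
      l (𝓝 (∫ x, χ x * φ x ∂μ)) := by
  have hT : 0 ≤ ∫ x, φ x ∂μ := integral_nonneg hφ0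
  rw [Metric.tendsto_nhds]
  intro ε hε
  have hη : 0 < ε / (∫ x, φ x ∂μ + 1) := by positivity
  obtain ⟨δ, hδ, hχδ⟩ := Metric.uniformContinuous_iff.1 hχ _ hη
  filter_upwards [hmesh.eventually (gt_mem_nhds hδ)] with p hp
  rw [Real.dist_eq]
  refine (abs_integral_cellMeasure_sub_le (hc p) (hdisj p) (hcover p) (hν0 p) (hν p) hφ0 hφ
    hχ.continuous.stronglyMeasurable hχC fun j x hx y hy => (hχδ ?_).le).trans_lt ?_
  · exact ((Metric.dist_le_diam_of_mem (hbdd p j) hy hx).trans (hdiam p j)).trans_lt hp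
  · rw [div_mul_eq_mul_div, div_lt_iff₀ (by positivity)]
    nlinarith

end Measure

end MeasureTheory

theorem stmt16_general {m : ℕ} (μ : Measure (Fin m → ℝ))
    (I : Set (Fin m → ℝ)) (hI : IsCompact I) (hμI : μ Iᶜ = 0)
    (f g : (Fin m → ℝ) → ℝ) (hf : Integrable f μ) (hg : Integrable g μ)
    (hf0 : 0 ≤ f) (hg0 : 0 ≤ g) (n k : ℕ) (hk1 : 1 ≤ k) (hkn : k ≤ n - 1)
    (cells : ℕ → ℕ → Set (Fin m → ℝ))
    (hmeas : ∀ p j, MeasurableSet (cells p j))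
    (hdisj : ∀ p, Pairwise fun i j => Disjoint (cells p i) (cells p j))
    (hcover : ∀ p, (⋃ j, cells p j) = I)
    (hpos : ∀ p j, 0 < volume (cells p j)) (hfin : ∀ p j, volume (cells p j) < ⊤)
    (mesh : ℕ → ℝ) (hmesh : Tendsto mesh atTop (𝓝 0))
    (hdiam : ∀ p j, Metric.diam (cells p j) ≤ mesh p) :
    (∀ p,
      (Measure.sum fun j =>
          (ENNReal.ofReal (∫ x in cells p j,
              (f x) ^ ((k : ℝ) / n) * (g x) ^ (((n - k : ℕ) : ℝ) / n) ∂μ)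
            / volume (cells p j)) • volume.restrict (cells p j))
        ≤ (Measure.sum fun j =>
            (ENNReal.ofReal
                ((∫ x in cells p j, f x ∂μ) ^ ((k : ℝ) / n)
                  * (∫ x in cells p j, g x ∂μ) ^ (((n - k : ℕ) : ℝ) / n))
              / volume (cells p j)) • volume.restrict (cells p j)))
    ∧ ∀ χ : (Fin m → ℝ) → ℝ, Continuous χ → HasCompactSupport χ →
        Tendsto
          (fun p => ∫ x, χ x
            ∂(Measure.sum fun j =>
                (ENNReal.ofReal (∫ x in cells p j,
                    (f x) ^ ((k : ℝ) / n) * (g x) ^ (((n - k : ℕ) : ℝ) / n) ∂μ)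
                  / volume (cells p j)) • volume.restrict (cells p j)))
          atTop
          (𝓝 (∫ x, χ x
            ∂(μ.withDensity fun x =>
                ENNReal.ofReal ((f x) ^ ((k : ℝ) / n) * (g x) ^ (((n - k : ℕ) : ℝ) / n))))) := by
  have ha : 0 ≤ (k : ℝ) / n := by positivity
  have hb : 0 ≤ ((n - k : ℕ) : ℝ) / n := by positivity
  have hab : (k : ℝ) / n + ((n - k : ℕ) : ℝ) / n = 1 := by
    rw [← add_div, Nat.cast_sub (by omega), add_sub_cancel, div_self (by norm_cast; omega)]
  have hf0' : 0 ≤ᵐ[μ] f := ae_of_all _ hf0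
  have hg0' : 0 ≤ᵐ[μ] g := ae_of_all _ hg0
  have hφ0 : 0 ≤ fun x => f x ^ ((k : ℝ) / n) * g x ^ (((n - k : ℕ) : ℝ) / n) := fun x =>
    mul_nonneg (Real.rpow_nonneg (hf0 x) _) (Real.rpow_nonneg (hg0 x) _)
  have hφ := hf.rpow_mul_rpow hg hf0' hg0' ha hb hab
  refine ⟨fun p => Measure.cellMeasure_mono fun j => ENNReal.ofReal_le_ofReal ?_,
    fun χ hχ hχs => ?_⟩
  · exact integral_rpow_mul_rpow_le hf.restrict hg.restrict (ae_restrict_of_ae hf0')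
      (ae_restrict_of_ae hg0') ha hb hab
  obtain ⟨C, hC⟩ := hχs.exists_bound_of_continuous hχ
  have hIae : ∀ᵐ x ∂μ, x ∈ I := mem_ae_iff.2 hμI
  rw [integral_withDensity_ofReal hφ0 hφ.aemeasurable]
  exact Measure.tendsto_integral_cellMeasure hmeas hdisj (fun p => (hcover p).symm ▸ hIae)
    (fun p j => (hpos p j).ne') (fun p j => (hfin p j).ne)
    (fun p j => hI.isBounded.subset (hcover p ▸ Set.subset_iUnion _ j)) hmesh hdiam hφ0 hφ
    (hχs.uniformContinuous_of_continuous hχ) hC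

/-- Hölder's inequality on each cell plus weak* convergence of the canonical approximants:
the discretized measure built from `(∫_{Iⱼ} f dμ)^(k/n) (∫_{Iⱼ} g dμ)^((n-k)/n)` dominates the
one built from `∫_{Iⱼ} f^(k/n) g^((n-k)/n) dμ`, and as the partitions refine (mesh → 0,
`μ`-null boundaries) the latter converges weakly* to `f^(k/n) g^((n-k)/n) μ`. -/
theorem stmt16 {m : ℕ} (μ : Measure (Fin m → ℝ)) [IsFiniteMeasure μ]
    (I : Set (Fin m → ℝ)) (hI : IsCompact I) (hμI : μ Iᶜ = 0)
    (f g : (Fin m → ℝ) → ℝ) (hf : Integrable f μ) (hg : Integrable g μ)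
    (hf0 : 0 ≤ f) (hg0 : 0 ≤ g) (n k : ℕ) (hk1 : 1 ≤ k) (hkn : k ≤ n - 1)
    (cells : ℕ → ℕ → Set (Fin m → ℝ))
    (hmeas : ∀ p j, MeasurableSet (cells p j))
    (hdisj : ∀ p, Pairwise fun i j => Disjoint (cells p i) (cells p j))
    (hcover : ∀ p, (⋃ j, cells p j) = I)
    (hpos : ∀ p j, 0 < volume (cells p j)) (hfin : ∀ p j, volume (cells p j) < ⊤)
    (hbd : ∀ p j, μ (frontier (cells p j)) = 0)
    (mesh : ℕ → ℝ) (hmesh : Tendsto mesh atTop (𝓝 0))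
    (hdiam : ∀ p j, Metric.diam (cells p j) ≤ mesh p) :
    (∀ p,
      (Measure.sum fun j =>
          (ENNReal.ofReal (∫ x in cells p j,
              (f x) ^ ((k : ℝ) / n) * (g x) ^ (((n - k : ℕ) : ℝ) / n) ∂μ)
            / volume (cells p j)) • volume.restrict (cells p j))
        ≤ (Measure.sum fun j =>
            (ENNReal.ofReal
                ((∫ x in cells p j, f x ∂μ) ^ ((k : ℝ) / n)
                  * (∫ x in cells p j, g x ∂μ) ^ (((n - k : ℕ) : ℝ) / n))
              / volume (cells p j)) • volume.restrict (cells p j)))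
    ∧ ∀ χ : (Fin m → ℝ) → ℝ, Continuous χ → HasCompactSupport χ →
        Tendsto
          (fun p => ∫ x, χ x
            ∂(Measure.sum fun j =>
                (ENNReal.ofReal (∫ x in cells p j,
                    (f x) ^ ((k : ℝ) / n) * (g x) ^ (((n - k : ℕ) : ℝ) / n) ∂μ)
                  / volume (cells p j)) • volume.restrict (cells p j)))
          atTop
          (𝓝 (∫ x, χ x
            ∂(μ.withDensity fun x =>
                ENNReal.ofReal ((f x) ^ ((k : ℝ) / n) * (g x) ^ (((n - k : ℕ) : ℝ) / n))))) :=
  stmt16_general μ I hI hμI f g hf hg hf0 hg0 n k hk1 hkn cells hmeas hdisj hcover hpos hfin mesh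
    hmesh hdiam
end
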